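/- Assume every symmetric n×n matrix over K is diagonalizable over K, where n ≥ 2. Then K is formally real and Pythagorean. -/

import Mathlib

open Matrix
def IsDiagonalizable {K : Type*} [Field K] {m : Type*} [Fintype m] [DecidableEq m]
    (A : Matrix m m K) : Prop :=
  ∃ P : Matrix m m K, IsUnit P ∧ (P⁻¹ * A * P).IsDiag
def FormallyReal (K : Type*) [Field K] : Prop := ¬ IsSumSq (-1 : K)
def Pythagorean (K : Type*) [Field K] : Prop := ∀ a b : K, ∃ c : K, a ^ 2 + b ^ 2 = c ^ 2

/-!
The symmetric matrix `A = [[a, b], [b, -a]]`, placed as a corner block of an `n × n` matrix,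
satisfies `A³ = (a² + b²) A`. A nonzero diagonalizable `A` has a nonzero eigenvalue `d`, and
`d³ = (a² + b²) d` makes `a² + b² = d²` a nonzero square. This is the Pythagorean property, and
then every sum of squares is a square; but if `-1 = c²`, the choice `(a, b) = (1, c)` would make
`1 + c² = 0` a nonzero square.
-/

section

variable {K : Type*} [Field K]

namespace IsDiagonalizable

variable {m m' : Type*} [Fintype m] [DecidableEq m] [Fintype m'] [DecidableEq m']

theorem reindex {A : Matrix m m K} (hA : IsDiagonalizable A) (e : m ≃ m') :
    IsDiagonalizable (Matrix.reindex e e A) := by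
  obtain ⟨P, hP, hD⟩ := hA
  refine ⟨Matrix.reindex e e P, hP.map (reindexAlgEquiv K K e), ?_⟩
  rw [inv_reindex, reindex_apply, reindex_apply, reindex_apply, submatrix_mul_equiv,
    submatrix_mul_equiv]
  exact hD.submatrix e.symm.injective

theorem ne_zero_and_isSquare_of_cube_eq_smul {A : Matrix m m K} (hA : IsDiagonalizable A)
    (hA0 : A ≠ 0) {s : K} (hs : A * A * A = s • A) : s ≠ 0 ∧ IsSquare s := by
  obtain ⟨P, hP, hD⟩ := hA
  let := hP.invertible
  set d := (P⁻¹ * A * P).diag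
  have hconj : P⁻¹ * A * P = diagonal d := hD.diagonal_diag.symm
  have hA_eq : A = P * diagonal d * P⁻¹ := by simp [← hconj, mul_assoc]
  have hD3 : diagonal d * diagonal d * diagonal d = s • diagonal d := by
    rw [← hconj]
    simp only [mul_assoc, mul_inv_cancel_left_of_invertible]
    rw [show A * (A * (A * P)) = A * A * A * P by simp only [mul_assoc], hs, Matrix.smul_mul,
      Matrix.mul_smul]
  have hd3 (i : m) : d i * d i * d i = s * d i := by
    simpa using congrFun₂ hD3 i i
  obtain ⟨i, hi⟩ : ∃ i, d i ≠ 0 := by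
    by_contra! hd
    exact hA0 (by simp [hA_eq, show d = 0 from funext hd])
  have hdi : d i * d i = s := mul_right_cancel₀ hi (hd3 i)
  exact ⟨hdi ▸ mul_self_ne_zero.2 hi, d i, hdi.symm⟩

end IsDiagonalizable

namespace Matrix

def cornerReflection (ι : Type*) (a b : K) : Matrix (Fin 2 ⊕ ι) (Fin 2 ⊕ ι) K :=
  fromBlocks !![a, b; b, -a] 0 0 0

variable {ι : Type*}

theorem cornerReflection_isSymm (a b : K) : (cornerReflection ι a b).IsSymm :=
  IsSymm.fromBlocks (by ext i j; fin_cases i <;> fin_cases j <;> rfl) (by simp) (by simp)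

theorem cornerReflection_cube [Fintype ι] (a b : K) :
    cornerReflection ι a b * cornerReflection ι a b * cornerReflection ι a b =
      (a ^ 2 + b ^ 2) • cornerReflection ι a b := by
  simp only [cornerReflection, fromBlocks_multiply, fromBlocks_smul, mul_fin_two, smul_of,
    Matrix.mul_zero, Matrix.zero_mul, add_zero, smul_zero]
  congr 2
  ext i j
  fin_cases i <;> fin_cases j <;> simp <;> ring

theorem cornerReflection_eq_zero_iff {a b : K} :
    cornerReflection ι a b = 0 ↔ a = 0 ∧ b = 0 := by
  constructor
  · intro h
    exact ⟨by simpa [cornerReflection] using congrFun₂ h (.inl 0) (.inl 0),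
      by simpa [cornerReflection] using congrFun₂ h (.inl 0) (.inl 1)⟩
  · rintro ⟨rfl, rfl⟩
    rw [cornerReflection, neg_zero, ← fromBlocks_zero]
    congr
    exact (eta_fin_two (0 : Matrix (Fin 2) (Fin 2) K)).symm

end Matrix

theorem Pythagorean.isSquare_of_isSumSq (hK : Pythagorean K) {s : K} (hs : IsSumSq s) :
    IsSquare s := by
  induction hs with
  | zero => exact ⟨0, by ring⟩
  | sq_add a _ ih =>
    obtain ⟨r, rfl⟩ := ih
    obtain ⟨c, hc⟩ := hK a r
    exact ⟨c, by rw [← sq, ← sq, hc, sq]⟩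

section CornerReflection

variable {ι : Type*} [Fintype ι] [DecidableEq ι]

theorem pythagorean_of_forall_isSymm_isDiagonalizable
    (h : ∀ A : Matrix (Fin 2 ⊕ ι) (Fin 2 ⊕ ι) K, A.IsSymm → IsDiagonalizable A) :
    Pythagorean K := by
  intro a b
  by_cases h0 : cornerReflection ι a b = 0
  · obtain ⟨rfl, rfl⟩ := cornerReflection_eq_zero_iff.1 h0
    exact ⟨0, by ring⟩
  · obtain ⟨-, c, hc⟩ := (h _ (cornerReflection_isSymm a b)).ne_zero_and_isSquare_of_cube_eq_smul
      h0 (cornerReflection_cube a b)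
    exact ⟨c, by rw [hc, sq]⟩

theorem formallyReal_of_forall_isSymm_isDiagonalizable
    (h : ∀ A : Matrix (Fin 2 ⊕ ι) (Fin 2 ⊕ ι) K, A.IsSymm → IsDiagonalizable A) :
    FormallyReal K := by
  intro hsum
  obtain ⟨c, hc⟩ := (pythagorean_of_forall_isSymm_isDiagonalizable h).isSquare_of_isSumSq hsum
  have h0 : cornerReflection ι 1 c ≠ 0 := by simp [cornerReflection_eq_zero_iff]
  obtain ⟨hne, -⟩ := (h _ (cornerReflection_isSymm 1 c)).ne_zero_and_isSquare_of_cube_eq_smul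
    h0 (cornerReflection_cube 1 c)
  exact hne (by rw [sq c, ← hc]; ring)

end CornerReflection

end

theorem stmt11 {K : Type*} [Field K] {n : ℕ} (hn : 2 ≤ n)
    (h : ∀ A : Matrix (Fin n) (Fin n) K, A.IsSymm → IsDiagonalizable A) :
    FormallyReal K ∧ Pythagorean K := by
  obtain ⟨k, rfl⟩ := Nat.exists_eq_add_of_le hn
  have h' (A : Matrix (Fin 2 ⊕ Fin k) (Fin 2 ⊕ Fin k) K) (hA : A.IsSymm) :
      IsDiagonalizable A := by
    simpa using (h _ (hA.submatrix finSumFinEquiv.symm)).reindex finSumFinEquiv.symm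
  exact ⟨formallyReal_of_forall_isSymm_isDiagonalizable h',
    pythagorean_of_forall_isSymm_isDiagonalizable h'⟩
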